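/- Suppose Ω_- and Ω_+ have opposite real parts (Re Ω_- = -Re Ω_+), the scattering matrix S is purely imaginary, and the coupling matrices C_-, C_+ are real. Then for every s ∈ ℂ such that s·I_{2n} - A is invertible, the bottom-right block of the quadrature transfer function vanishes: G_pp[s] = 0, i.e., a BAE measurement of p_out with respect to p_in is realized. -/
import Mathlib

open Matrix Complex

noncomputable section

/-- Entrywise real part of a complex matrix, viewed as a complex matrix. -/
def reM {α β : Type*} (M : Matrix α β ℂ) : Matrix α β ℂ :=
  M.map fun z => (z.re : ℂ)

/-- Entrywise imaginary part of a complex matrix, viewed as a complex matrix. -/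
def imM {α β : Type*} (M : Matrix α β ℂ) : Matrix α β ℂ :=
  M.map fun z => (z.im : ℂ)

/-- The quadrature scattering matrix `D = [[Re S, -Im S],[Im S, Re S]]`. -/
def QD {m : ℕ} (S : Matrix (Fin m) (Fin m) ℂ) :
    Matrix (Fin m ⊕ Fin m) (Fin m ⊕ Fin m) ℂ :=
  fromBlocks (reM S) (-(imM S)) (imM S) (reM S)

/-- The quadrature coupling matrix
`C = [[Re(C₋+C₊), -Im(C₋-C₊)],[Im(C₋+C₊), Re(C₋-C₊)]]`. -/
def QC {m n : ℕ} (Cm Cp : Matrix (Fin m) (Fin n) ℂ) :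
    Matrix (Fin m ⊕ Fin m) (Fin n ⊕ Fin n) ℂ :=
  fromBlocks (reM (Cm + Cp)) (-(imM (Cm - Cp))) (imM (Cm + Cp)) (reM (Cm - Cp))

/-- The quadrature input matrix
`B = -[[Re(C₋†-C₊†), -Im(C₋†-C₊†)],[Im(C₋†+C₊†), Re(C₋†+C₊†)]] · D`. -/
def QB {m n : ℕ} (Cm Cp : Matrix (Fin m) (Fin n) ℂ) (S : Matrix (Fin m) (Fin m) ℂ) :
    Matrix (Fin n ⊕ Fin n) (Fin m ⊕ Fin m) ℂ :=
  -(fromBlocks (reM (Cmᴴ - Cpᴴ)) (-(imM (Cmᴴ - Cpᴴ)))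
      (imM (Cmᴴ + Cpᴴ)) (reM (Cmᴴ + Cpᴴ)) * QD S)

/-- `JH = [[Im(Ω₋+Ω₊), Re(Ω₋-Ω₊)],[-Re(Ω₋+Ω₊), Im(Ω₋-Ω₊)]]`. -/
def QJH {n : ℕ} (Om Op : Matrix (Fin n) (Fin n) ℂ) :
    Matrix (Fin n ⊕ Fin n) (Fin n ⊕ Fin n) ℂ :=
  fromBlocks (imM (Om + Op)) (reM (Om - Op)) (-(reM (Om + Op))) (imM (Om - Op))

/-- `𝕁ₖ = [[0, Iₖ],[-Iₖ, 0]]`. -/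
def QJ (k : ℕ) : Matrix (Fin k ⊕ Fin k) (Fin k ⊕ Fin k) ℂ :=
  fromBlocks 0 1 (-1) 0

/-- `C♯ = -𝕁ₙ · C† · 𝕁ₘ`. -/
def QCsharp {m n : ℕ} (Cm Cp : Matrix (Fin m) (Fin n) ℂ) :
    Matrix (Fin n ⊕ Fin n) (Fin m ⊕ Fin m) ℂ :=
  -(QJ n * (QC Cm Cp)ᴴ * QJ m)

/-- `A = JH - (1/2) · C♯ · C`. -/
def QA {m n : ℕ} (Cm Cp : Matrix (Fin m) (Fin n) ℂ) (Om Op : Matrix (Fin n) (Fin n) ℂ) :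
    Matrix (Fin n ⊕ Fin n) (Fin n ⊕ Fin n) ℂ :=
  QJH Om Op - (1/2 : ℂ) • (QCsharp Cm Cp * QC Cm Cp)

/-- The quadrature transfer function `G[s] = D + C (sI - A)⁻¹ B`. -/
def QG {m n : ℕ} (Cm Cp : Matrix (Fin m) (Fin n) ℂ) (Om Op : Matrix (Fin n) (Fin n) ℂ)
    (S : Matrix (Fin m) (Fin m) ℂ) (s : ℂ) :
    Matrix (Fin m ⊕ Fin m) (Fin m ⊕ Fin m) ℂ :=
  QD S + QC Cm Cp *
    (s • (1 : Matrix (Fin n ⊕ Fin n) (Fin n ⊕ Fin n) ℂ) - QA Cm Cp Om Op)⁻¹ * QB Cm Cp S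

lemma imM_add' {α β : Type*} (M N : Matrix α β ℂ) : imM (M + N) = imM M + imM N := by
  ext i j; simp [imM]

lemma imM_sub' {α β : Type*} (M N : Matrix α β ℂ) : imM (M - N) = imM M - imM N := by
  ext i j; simp [imM]

lemma reM_add' {α β : Type*} (M N : Matrix α β ℂ) : reM (M + N) = reM M + reM N := by
  ext i j; simp [reM]

lemma reM_of_imM {α β : Type*} {M : Matrix α β ℂ} (h : imM M = 0) : reM M = M := by
  ext i j
  have h' : (M i j).im = 0 := by
    have := congrFun (congrFun h i) j
    simpa [imM] using this
  simp [reM]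
  exact (Complex.ext (by simp) (by simp [h'])).symm

lemma imM_conjTranspose' {α β : Type*} {M : Matrix α β ℂ} (h : imM M = 0) : imM Mᴴ = 0 := by
  ext i j
  have h' : (M j i).im = 0 := by
    have := congrFun (congrFun h j) i
    simpa [imM] using this
  simp [imM, conjTranspose_apply, h']

lemma fromBlocks_sub {l m n o α : Type*} [SubtractionMonoid α] (A A' : Matrix n l α)
    (B B' : Matrix n m α) (C C' : Matrix o l α) (D D' : Matrix o m α) :
    fromBlocks A B C D - fromBlocks A' B' C' D' =
      fromBlocks (A - A') (B - B') (C - C') (D - D') := by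
  ext i j
  cases i <;> cases j <;> simp [fromBlocks]

/-- Re Ω₋ = -Re Ω₊, S purely imaginary, C₋, C₊ real ⟹ G_pp[s] = 0. -/
theorem stmt9 {m n : ℕ} (Cm Cp : Matrix (Fin m) (Fin n) ℂ)
    (Om Op : Matrix (Fin n) (Fin n) ℂ)
    (S : Matrix (Fin m) (Fin m) ℂ)
    (hOmHerm : Omᴴ = Om) (hOpSymm : Opᵀ = Op)
    (hRe : reM Om = -(reM Op)) (hS : reM S = 0) (hCm : imM Cm = 0) (hCp : imM Cp = 0)
    (s : ℂ)
    (hs : IsUnit (s • (1 : Matrix (Fin n ⊕ Fin n) (Fin n ⊕ Fin n) ℂ) - QA Cm Cp Om Op)) :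
    (QG Cm Cp Om Op S s).toBlocks₂₂ = 0 := by
  have hXim : imM (Cm + Cp) = 0 := by rw [imM_add', hCm, hCp, add_zero]
  have hYim : imM (Cm - Cp) = 0 := by rw [imM_sub', hCm, hCp, sub_zero]
  have hC : QC Cm Cp = fromBlocks (Cm + Cp) 0 0 (Cm - Cp) := by
    rw [QC, reM_of_imM hXim, reM_of_imM hYim, hXim, hYim, neg_zero]
  have hD : QD S = fromBlocks 0 (-(imM S)) (imM S) 0 := by rw [QD, hS]
  have hBL : imM (Cmᴴ - Cpᴴ) = 0 := by
    rw [imM_sub', imM_conjTranspose' hCm, imM_conjTranspose' hCp, sub_zero]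
  have hBR : imM (Cmᴴ + Cpᴴ) = 0 := by
    rw [imM_add', imM_conjTranspose' hCm, imM_conjTranspose' hCp, add_zero]
  have hB : QB Cm Cp S =
      fromBlocks 0 ((Cmᴴ - Cpᴴ) * imM S) (-((Cmᴴ + Cpᴴ) * imM S)) 0 := by
    rw [QB, reM_of_imM hBL, reM_of_imM hBR, hBL, hBR, neg_zero, hD, fromBlocks_multiply]
    simp [fromBlocks_neg]
  have hCs : QCsharp Cm Cp = fromBlocks (Cm - Cp)ᴴ 0 0 (Cm + Cp)ᴴ := by
    rw [QCsharp, hC, QJ, QJ, fromBlocks_conjTranspose, fromBlocks_multiply, fromBlocks_multiply]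
    simp [fromBlocks_neg]
  have hRe0 : reM (Om + Op) = 0 := by rw [reM_add', hRe, neg_add_cancel]
  have hA : QA Cm Cp Om Op =
      fromBlocks (imM (Om + Op) - (1/2 : ℂ) • ((Cm - Cp)ᴴ * (Cm + Cp)))
        (reM (Om - Op)) 0
        (imM (Om - Op) - (1/2 : ℂ) • ((Cm + Cp)ᴴ * (Cm - Cp))) := by
    rw [QA, QJH, hRe0, hCs, hC, fromBlocks_multiply, fromBlocks_smul]
    simp [fromBlocks_sub]
  set P := s • (1 : Matrix (Fin n) (Fin n) ℂ) -
      (imM (Om + Op) - (1/2 : ℂ) • ((Cm - Cp)ᴴ * (Cm + Cp))) with hP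
  set R := s • (1 : Matrix (Fin n) (Fin n) ℂ) -
      (imM (Om - Op) - (1/2 : ℂ) • ((Cm + Cp)ᴴ * (Cm - Cp))) with hR
  set Q := -(reM (Om - Op)) with hQ
  have hM : s • (1 : Matrix (Fin n ⊕ Fin n) (Fin n ⊕ Fin n) ℂ) - QA Cm Cp Om Op =
      fromBlocks P Q 0 R := by
    rw [hA, ← fromBlocks_one, fromBlocks_smul, fromBlocks_sub]
    simp [hP, hQ, hR, sub_eq_add_neg]
  rw [hM] at hs
  obtain ⟨hPu, hRu⟩ := isUnit_fromBlocks_zero₂₁.mp hs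
  have hinv : (fromBlocks P Q 0 R)⁻¹ = fromBlocks P⁻¹ (-(P⁻¹ * Q * R⁻¹)) 0 R⁻¹ :=
    inv_fromBlocks_zero₂₁_of_isUnit_iff P Q R (iff_of_true hPu hRu)
  rw [QG, hM, hinv, hD, hC, hB, fromBlocks_multiply, fromBlocks_multiply, fromBlocks_add,
    toBlocks_fromBlocks₂₂]
  simp
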